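/- Assume q ≥ 4. For every a ∈ F_q*, the Hamming weight of the vector c_2(a) = (tr(a·γ_1^{-1}), ..., tr(a·γ_{q/2−1}^{-1})) ∈ F_2^{q/2−1} equals (q − 1 − K(a))/4. -/
import Mathlib


open Finset

/-- The trace map `tr : F_q → F_2 ⊆ F_q`, `tr x = x + x² + ⋯ + x^(2^(r-1))`. -/
def trF {F : Type*} [Field F] (r : ℕ) (x : F) : F :=
  ∑ i ∈ Finset.range r, x ^ (2 ^ i)

/-- The trace map with values in `F_2 = ZMod 2` (the value of `trF` is always `0` or `1`). -/
def tr2 {F : Type*} [Field F] [DecidableEq F] (r : ℕ) (x : F) : ZMod 2 :=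
  if trF r x = 0 then 0 else 1

/-- The canonical additive character `λ(x) = (-1)^(tr x) ∈ ℤ` of `F_q`. -/
def lamF {F : Type*} [Field F] [DecidableEq F] (r : ℕ) (x : F) : ℤ :=
  if trF r x = 0 then 1 else -1

/-- The Kloosterman sum `K(a) = ∑_{α ∈ F_q*} λ(α + a·α⁻¹)`. -/
def Kloos {F : Type*} [Field F] [Fintype F] [DecidableEq F] (r : ℕ) (a : F) : ℤ :=
  ∑ α ∈ Finset.univ.filter (fun α : F => α ≠ 0), lamF r (α + a * α⁻¹)

/-- The Hamming weight of a vector over `F_2`: the number of nonzero coordinates. -/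
def wt {n : ℕ} (u : Fin n → ZMod 2) : ℕ :=
  (Finset.univ.filter (fun l => u l ≠ 0)).card

/-- The vector `(g_1⁻¹, …, g_m⁻¹) ∈ F_q^m`. -/
def invVec {F : Type*} [Field F] {m : ℕ} (g : Fin m → F) : Fin m → F :=
  fun l => (g l)⁻¹

/-- The codeword map `a ↦ (tr(a·v_1), …, tr(a·v_n)) ∈ F_2^n`. -/
def cw {F : Type*} [Field F] [DecidableEq F] (r : ℕ) {n : ℕ} (v : Fin n → F) (a : F) :
    Fin n → ZMod 2 :=
  fun l => tr2 r (a * v l)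

section Aux


variable {F : Type*} [Field F]

lemma trF_zero (r : ℕ) : trF (F := F) r 0 = 0 := by
  unfold trF
  apply Finset.sum_eq_zero
  intro i _
  exact zero_pow (pow_ne_zero i two_ne_zero)

lemma trF_sq (r : ℕ) (hpow : ∀ x : F, x ^ (2 ^ r) = x) (x : F) :
    trF r (x ^ 2) = trF r x := by
  have h1 : ∑ i ∈ range (r + 1), x ^ (2 ^ i)
      = trF r x + x ^ (2 ^ r) := Finset.sum_range_succ _ r
  have h2 : ∑ i ∈ range (r + 1), x ^ (2 ^ i)
      = (∑ i ∈ range r, x ^ (2 ^ (i + 1))) + x ^ (2 ^ 0) :=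
    Finset.sum_range_succ' _ r
  have h3 : trF r (x ^ 2) = ∑ i ∈ range r, x ^ (2 ^ (i + 1)) := by
    unfold trF
    refine Finset.sum_congr rfl fun i _ => ?_
    rw [← pow_mul, pow_succ, mul_comm (2 ^ i) 2, mul_comm 2 (2 ^ i)]
  rw [h3]
  have h4 := h1.symm.trans h2
  rw [hpow] at h4
  simp only [pow_zero, pow_one] at h4
  exact (add_right_cancel h4).symm

end Aux

/-- For `q ≥ 4` and every `a ∈ F_q*`, the Hamming weight of
`c_2(a) = (tr(a·γ_1⁻¹), …, tr(a·γ_{q/2−1}⁻¹)) ∈ F_2^(q/2−1)` equals `(q − 1 − K(a))/4`,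
where `γ_1, …, γ_{q/2−1}` enumerate the nonzero elements of `Θ(F_q) = {α² + α : α ∈ F_q}`. -/

theorem weight_c2 {F : Type*} [Field F] [Fintype F] [DecidableEq F]
    (r : ℕ) (hr : 0 < r) (hq : 4 ≤ 2 ^ r) (hF : Fintype.card F = 2 ^ r)
    (γ : Fin (2 ^ (r - 1) - 1) → F) (hγinj : Function.Injective γ)
    (hγran : Set.range γ = {β : F | β ≠ 0 ∧ ∃ α : F, β = α ^ 2 + α})
    (a : F) (ha : a ≠ 0) :
    (wt (cw r (invVec γ) a) : ℚ) = ((2 ^ r : ℚ) - 1 - (Kloos r a : ℚ)) / 4 := by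
  classical
  -- characteristic 2
  obtain ⟨p, hp⟩ := CharP.exists F
  haveI := hp
  obtain ⟨n, hpp, hcard⟩ := FiniteField.card F p
  have hp2 : p = 2 := by
    have hdvd : p ∣ 2 ^ r := by
      rw [← hF, hcard]
      exact dvd_pow_self p (by positivity)
    have := hpp.dvd_of_dvd_pow hdvd
    exact (Nat.prime_dvd_prime_iff_eq hpp Nat.prime_two).mp this
  subst hp2
  have htwo : (2 : F) = 0 := by
    have := CharP.cast_eq_zero F 2
    exact_mod_cast this
  have hadd : ∀ x : F, x + x = 0 := fun x => by
    rw [← two_mul, htwo, zero_mul]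
  have hpowq : ∀ x : F, x ^ (2 ^ r) = x := fun x => by
    rw [← hF]; exact FiniteField.pow_card x
  have hsqrt : ∀ x : F, (x ^ (2 ^ (r - 1))) ^ 2 = x := fun x => by
    rw [← pow_mul]
    have h2 : 2 ^ (r - 1) * 2 = 2 ^ r := by
      rw [← pow_succ]; congr 1; omega
    rw [h2]; exact hpowq x
  have hsqinj : ∀ x y : F, x ^ 2 = y ^ 2 → x = y := by
    intro x y h
    have h0 : (x + y) ^ 2 = 0 := by linear_combination h + (x * y + y ^ 2) * htwo
    have := pow_eq_zero_iff (n := 2) (by norm_num) |>.mp h0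
    linear_combination this - y * htwo
  have htr_sq : ∀ x : F, trF r (x ^ 2) = trF r x := trF_sq r hpowq
  -- key finsets
  set A : Finset F :=
    univ.filter (fun α : F => α ≠ 0 ∧ trF r (α + a * α⁻¹) ≠ 0) with hA
  set B : Finset F :=
    univ.filter (fun β : F => (β ≠ 0 ∧ ∃ c : F, β = c ^ 2 + c) ∧ trF r (a * β⁻¹) ≠ 0) with hB
  -- Step 1 : weight = B.card
  have hwt : wt (cw r (invVec γ) a) = B.card := by
    have hup : wt (cw r (invVec γ) a)
        = (univ.filter (fun l => trF r (a * (γ l)⁻¹) ≠ 0)).card := by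
      unfold wt cw invVec tr2
      congr 1
      apply Finset.filter_congr
      intro l _
      by_cases h : trF r (a * (γ l)⁻¹) = 0
      · simp [h]
      · simp [h]
    rw [hup]
    apply Finset.card_bij (fun l _ => γ l)
    · intro l hl
      have hmem : γ l ∈ Set.range γ := ⟨l, rfl⟩
      rw [hγran] at hmem
      simp only [hB, Finset.mem_filter, Finset.mem_univ, true_and] at hl ⊢
      exact ⟨hmem, hl⟩
    · intro l _ l' _ h
      exact hγinj h
    · intro β hβ
      simp only [hB, Finset.mem_filter, Finset.mem_univ, true_and] at hβ
      have : β ∈ Set.range γ := by rw [hγran]; exact hβ.1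
      obtain ⟨l, hl⟩ := this
      refine ⟨l, ?_, hl⟩
      simp only [Finset.mem_filter, Finset.mem_univ, true_and]
      rw [hl]
      exact hβ.2
  -- Step 2 : A.card = 2 * B.card
  have hN : A.card = 2 * B.card := by
    have hΦ : ∀ α ∈ A, a * ((α + a * α⁻¹) ^ 2)⁻¹ ∈ B := by
      intro α hα
      simp only [hA, Finset.mem_filter, Finset.mem_univ, true_and] at hα
      obtain ⟨hα0, htrα⟩ := hα
      obtain ⟨y, hy⟩ : ∃ y : F, y = α + a * α⁻¹ := ⟨_, rfl⟩
      rw [← hy] at htrα ⊢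
      have hy0 : y ≠ 0 := by
        intro h
        rw [h] at htrα
        exact htrα (trF_zero r)
      have hkey : α * y = α ^ 2 + a := by
        rw [hy]; field_simp
      have haβ : a * (a * (y ^ 2)⁻¹)⁻¹ = y ^ 2 := by
        field_simp
      simp only [hB, Finset.mem_filter, Finset.mem_univ, true_and]
      refine ⟨⟨?_, ⟨α * y⁻¹, ?_⟩⟩, ?_⟩
      · exact mul_ne_zero ha (inv_ne_zero (pow_ne_zero 2 hy0))
      · rw [mul_inv_eq_iff_eq_mul₀ (pow_ne_zero 2 hy0)]
        have hexp : ((α * y⁻¹) ^ 2 + α * y⁻¹) * y ^ 2 = α ^ 2 + α * y := by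
          field_simp
        rw [hexp, hkey]
        linear_combination -(α ^ 2) * htwo
      · rw [haβ, htr_sq]; exact htrα
    have hfib : ∀ β ∈ B, (A.filter fun α => a * ((α + a * α⁻¹) ^ 2)⁻¹ = β).card = 2 := by
      intro β hβ
      simp only [hB, Finset.mem_filter, Finset.mem_univ, true_and] at hβ
      obtain ⟨⟨hβ0, c, hc⟩, htrβ⟩ := hβ
      obtain ⟨y₀, hy₀def⟩ : ∃ y₀ : F, y₀ = (a * β⁻¹) ^ 2 ^ (r - 1) := ⟨_, rfl⟩
      have hy₀sq : y₀ ^ 2 = a * β⁻¹ := by rw [hy₀def]; exact hsqrt _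
      have hy₀ : y₀ ≠ 0 := by
        intro h
        rw [h] at hy₀sq
        have h0 : a * β⁻¹ = 0 := by rw [← hy₀sq]; ring
        exact (mul_ne_zero ha (inv_ne_zero hβ0)) h0
      have hyb : y₀ ^ 2 * β = a := by rw [hy₀sq]; field_simp
      have hroot : ∀ α : F, α * (α + y₀) = a →
          (α ∈ A ∧ a * ((α + a * α⁻¹) ^ 2)⁻¹ = β) := by
        intro α hα
        have hα0 : α ≠ 0 := by
          rintro rfl
          simp only [zero_mul] at hα
          exact ha hα.symm
        have hinv : a * α⁻¹ = α + y₀ := by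
          field_simp
          linear_combination -hα
        have hyy : α + a * α⁻¹ = y₀ := by
          rw [hinv]
          linear_combination hadd α
        constructor
        · simp only [hA, Finset.mem_filter, Finset.mem_univ, true_and]
          refine ⟨hα0, ?_⟩
          rw [hyy]
          intro h
          rw [← htr_sq y₀, hy₀sq] at h
          exact htrβ h
        · rw [hyy, hy₀sq]
          field_simp
      have hpairmem : ∀ α : F,
          (α ∈ A ∧ a * ((α + a * α⁻¹) ^ 2)⁻¹ = β) ↔ (α = c * y₀ ∨ α = c * y₀ + y₀) := by
        intro α
        constructor
        · rintro ⟨hαA, hΦα⟩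
          simp only [hA, Finset.mem_filter, Finset.mem_univ, true_and] at hαA
          obtain ⟨hα0, htrα⟩ := hαA
          obtain ⟨y, hy⟩ : ∃ y : F, y = α + a * α⁻¹ := ⟨_, rfl⟩
          rw [← hy] at htrα hΦα
          have hy0 : y ≠ 0 := by
            intro h
            rw [h] at hΦα
            simp only [ne_eq, OfNat.ofNat_ne_zero, not_false_eq_true, zero_pow,
              inv_zero, mul_zero] at hΦα
            exact hβ0 hΦα.symm
          have hysq : y ^ 2 = a * β⁻¹ := by
            field_simp at hΦα ⊢
            linear_combination -hΦα
          have hyy0 : y = y₀ := hsqinj _ _ (hysq.trans hy₀sq.symm)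
          have h1 : α * y = α ^ 2 + a := by rw [hy]; field_simp
          have hαy : α * (α + y₀) = a := by
            rw [← hyy0]
            linear_combination h1 + α ^ 2 * htwo
          have hprod : (α + c * y₀) * (α + c * y₀ + y₀) = 0 := by
            linear_combination hαy + hyb - y₀ ^ 2 * hc + (a + c * α * y₀) * htwo
          rcases mul_eq_zero.mp hprod with h | h
          · left; linear_combination h - c * y₀ * htwo
          · right; linear_combination h - (c * y₀ + y₀) * htwo
        · rintro (rfl | rfl)
          · exact hroot _ (by
              linear_combination hyb + y₀ ^ 2 * hc
                + (c * y₀ ^ 2 + c ^ 2 * y₀ ^ 2 - y₀ ^ 2 * β) * htwo)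
          · exact hroot _ (by
              linear_combination hyb + y₀ ^ 2 * hc
                + (c * y₀ ^ 2 + c ^ 2 * y₀ ^ 2 - y₀ ^ 2 * β + c * y₀ ^ 2 + y₀ ^ 2) * htwo)
      have hfilter : A.filter (fun α => a * ((α + a * α⁻¹) ^ 2)⁻¹ = β)
          = {c * y₀, c * y₀ + y₀} := by
        ext α
        rw [Finset.mem_filter, Finset.mem_insert, Finset.mem_singleton]
        exact hpairmem α
      rw [hfilter]
      exact Finset.card_pair (fun h => hy₀ (left_eq_add.mp h))
    calc A.card = ∑ β ∈ B, (A.filter fun α => a * ((α + a * α⁻¹) ^ 2)⁻¹ = β).card :=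
        Finset.card_eq_sum_card_fiberwise hΦ
      _ = ∑ β ∈ B, 2 := Finset.sum_congr rfl hfib
      _ = 2 * B.card := by rw [Finset.sum_const, smul_eq_mul, mul_comm]
  -- Step 3 : Kloos = (2^r - 1) - 2 * A.card
  have hK : (Kloos r a : ℤ) = (2 ^ r - 1 : ℤ) - 2 * A.card := by
    set A' : Finset F :=
      (univ.filter fun α : F => α ≠ 0).filter
        (fun α => ¬ trF r (α + a * α⁻¹) ≠ 0) with hA'
    have h1 : (univ.filter fun α : F => α ≠ 0).filter
        (fun α => trF r (α + a * α⁻¹) ≠ 0) = A := by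
      rw [Finset.filter_filter]
    have hsplit := Finset.sum_filter_add_sum_filter_not
      (univ.filter fun α : F => α ≠ 0)
      (fun α => trF r (α + a * α⁻¹) ≠ 0) (fun α => lamF r (α + a * α⁻¹))
    rw [h1] at hsplit
    have hsumA : ∑ α ∈ A, lamF r (α + a * α⁻¹) = -(A.card : ℤ) := by
      have hval : ∀ α ∈ A, lamF r (α + a * α⁻¹) = -1 := by
        intro α hα
        simp only [hA, Finset.mem_filter] at hα
        unfold lamF
        rw [if_neg hα.2.2]
      rw [Finset.sum_congr rfl hval, Finset.sum_const]
      simp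
    have hsumA' : ∑ α ∈ A', lamF r (α + a * α⁻¹) = (A'.card : ℤ) := by
      have hval : ∀ α ∈ A', lamF r (α + a * α⁻¹) = 1 := by
        intro α hα
        simp only [hA', Finset.mem_filter, not_not] at hα
        unfold lamF
        rw [if_pos hα.2]
      rw [Finset.sum_congr rfl hval, Finset.sum_const]
      simp
    have hcards : A.card + A'.card = 2 ^ r - 1 := by
      have h2 := Finset.card_filter_add_card_filter_not
        (s := univ.filter fun α : F => α ≠ 0)
        (p := fun α => trF r (α + a * α⁻¹) ≠ 0)
      rw [h1] at h2
      rw [h2, Finset.filter_ne', Finset.card_erase_of_mem (Finset.mem_univ 0),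
        Finset.card_univ, hF]
    have h1r : (1 : ℕ) ≤ 2 ^ r := Nat.one_le_two_pow
    have hcardsZ : (A.card : ℤ) + A'.card = 2 ^ r - 1 := by
      zify [h1r] at hcards
      exact_mod_cast hcards
    unfold Kloos
    rw [← hsplit, hsumA, hsumA']
    linarith
  -- conclude
  have hKq : (Kloos r a : ℚ) = (2 ^ r - 1 : ℚ) - 2 * A.card := by exact_mod_cast hK
  have hNq : (A.card : ℚ) = 2 * B.card := by exact_mod_cast hN
  rw [hwt, hKq, hNq]
  ring
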